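/- arXiv:1009.3486 — 5 statements merged into one kernel-verified Lean document; each statement's English description precedes it below -/
import Mathlib

section
/- For every real ξ, applying the two-qubit phase gate to the middle two of four qubits prepared in two Bell pairs gives (I₂ ⊗ T_Z(ξ) ⊗ I₂)(|η₁⟩ ⊗ |η₁⟩) = (1/2)(|0000⟩ + e^{iξ}|0011⟩ + |1100⟩ + |1111⟩) in (ℂ²)^{⊗4}. Consequently the Z-Dango projector satisfies |D_Z(ξ)⟩⟨D_Z(ξ)| = Π · R(ξ) · Π, where Π = I₂ ⊗ (I₄ − |η₁⟩⟨η₁|) ⊗ I₂ and R(ξ) is the rank-one matrix supported on the span of {|0000⟩,|0011⟩,|1100⟩,|1111⟩} whose matrix in that ordered basis is (1/4)·[[1, e^{−iξ}, 1, 1],[e^{iξ}, 1, e^{iξ}, e^{iξ}],[1, e^{−iξ}, 1, 1],[1, e^{−iξ}, 1, 1]]. -/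
open Matrix Complex
open scoped ComplexConjugate

noncomputable section

/-- index type of the four-qubit space `(ℂ²)^{⊗4}` -/
abbrev Q4 : Type := Fin 2 × Fin 2 × Fin 2 × Fin 2

/-- Bell state `η₁ = (|00⟩+|11⟩)/√2` -/
def bell1 : Fin 2 × Fin 2 → ℂ := fun p =>
  if p = ((0 : Fin 2), (0 : Fin 2)) then ((1 / Real.sqrt 2 : ℝ) : ℂ)
  else if p = (1, 1) then ((1 / Real.sqrt 2 : ℝ) : ℂ) else 0

/-- Bell state `η₂ = (|00⟩−|11⟩)/√2` -/
def bell2 : Fin 2 × Fin 2 → ℂ := fun p =>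
  if p = ((0 : Fin 2), (0 : Fin 2)) then ((1 / Real.sqrt 2 : ℝ) : ℂ)
  else if p = (1, 1) then -((1 / Real.sqrt 2 : ℝ) : ℂ) else 0

/-- Bell state `η₃ = (|10⟩+|01⟩)/√2` -/
def bell3 : Fin 2 × Fin 2 → ℂ := fun p =>
  if p = ((1 : Fin 2), (0 : Fin 2)) then ((1 / Real.sqrt 2 : ℝ) : ℂ)
  else if p = (0, 1) then ((1 / Real.sqrt 2 : ℝ) : ℂ) else 0

/-- Bell state `η₄ = (|10⟩−|01⟩)/√2` -/
def bell4 : Fin 2 × Fin 2 → ℂ := fun p =>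
  if p = ((1 : Fin 2), (0 : Fin 2)) then ((1 / Real.sqrt 2 : ℝ) : ℂ)
  else if p = (0, 1) then -((1 / Real.sqrt 2 : ℝ) : ℂ) else 0

/-- outer product `|v⟩⟨w|` -/
def outer {n : Type*} (v w : n → ℂ) : Matrix n n ℂ :=
  Matrix.of fun i j => v i * conj (w j)

/-- the two-qubit phase gate `T_Z(ξ)`: `|00⟩↦|00⟩`, `|01⟩↦e^{iξ}|01⟩`, `|10⟩↦|10⟩`, `|11⟩↦|11⟩` -/
def TZ (ξ : ℝ) : Matrix (Fin 2 × Fin 2) (Fin 2 × Fin 2) ℂ :=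
  Matrix.diagonal fun p =>
    if p = ((0 : Fin 2), (1 : Fin 2)) then Complex.exp (Complex.I * ξ) else 1

/-- the two-qubit gate `T_X(ξ)` -/
def TX (ξ : ℝ) : Matrix (Fin 2 × Fin 2) (Fin 2 × Fin 2) ℂ :=
  ((1 + Complex.exp (Complex.I * ξ)) / 2) • (outer bell2 bell2 + outer bell4 bell4)
    + ((1 - Complex.exp (Complex.I * ξ)) / 2) • (outer bell2 bell4 + outer bell4 bell2)
    + outer bell1 bell1 + outer bell3 bell3

/-- `I₂ ⊗ T ⊗ I₂`, the middle operator acting on qubits 2,3 of qubits 1,2,3,4 -/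
def mid (T : Matrix (Fin 2 × Fin 2) (Fin 2 × Fin 2) ℂ) : Matrix Q4 Q4 ℂ :=
  Matrix.of fun a b =>
    (if a.1 = b.1 then (1 : ℂ) else 0) * T (a.2.1, a.2.2.1) (b.2.1, b.2.2.1) *
      (if a.2.2.2 = b.2.2.2 then 1 else 0)

/-- `|η₁⟩ ⊗ |η₁⟩`, the first Bell pair on qubits 1,2 and the second on qubits 3,4 -/
def bellPair : Q4 → ℂ := fun a => bell1 (a.1, a.2.1) * bell1 (a.2.2.1, a.2.2.2)

/-- the filtering operator `Π = I₂ ⊗ (I₄ − |η₁⟩⟨η₁|) ⊗ I₂` -/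
def filterOp : Matrix Q4 Q4 ℂ := mid (1 - outer bell1 bell1)

/-- the Z-Dango vector `D_Z(ξ)` -/
def DZ (ξ : ℝ) : Q4 → ℂ := filterOp.mulVec ((mid (TZ ξ)).mulVec bellPair)

/-- the X-Dango vector `D_X(ξ)` -/
def DX (ξ : ℝ) : Q4 → ℂ := filterOp.mulVec ((mid (TX ξ)).mulVec bellPair)

/-- identification `(ℂ²)^{⊗4} ≅ ℂ^{16}` -/
def q4Equiv : Q4 ≃ Fin 16 :=
  ((Equiv.prodCongr (Equiv.refl (Fin 2))
        ((Equiv.prodCongr (Equiv.refl (Fin 2)) finProdFinEquiv).trans finProdFinEquiv)).trans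
      finProdFinEquiv).trans (finCongr (by norm_num))

/-- the angle `kπ/4` encoded by `k : ZMod 8` -/
def angle (k : ZMod 8) : ℝ := (k.val : ℝ) * Real.pi / 4

/-- `D_Z(ξ)` as a vector in `ℂ^{16}` -/
def DZ16 (ξ : ℝ) : Fin 16 → ℂ := fun x => DZ ξ (q4Equiv.symm x)

/-- `D_X(ξ)` as a vector in `ℂ^{16}` -/
def DX16 (ξ : ℝ) : Fin 16 → ℂ := fun x => DX ξ (q4Equiv.symm x)

/-- the Z-Dango projector family `ρ_Z(k) = |D_Z(kπ/4)⟩⟨D_Z(kπ/4)|` -/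
def rhoZ (k : ZMod 8) : Matrix (Fin 16) (Fin 16) ℂ :=
  outer (DZ16 (angle k)) (DZ16 (angle k))

/-- the X-Dango projector family `ρ_X(k) = |D_X(kπ/4)⟩⟨D_X(kπ/4)|` -/
def rhoX (k : ZMod 8) : Matrix (Fin 16) (Fin 16) ℂ :=
  outer (DX16 (angle k)) (DX16 (angle k))

/-- `4·r`: the map `ZMod 2 → ZMod 8` sending `0 ↦ 0`, `1 ↦ 4` -/
def pad (r : ZMod 2) : ZMod 8 := 4 * (r.val : ZMod 8)

end

noncomputable section

/-- the (unnormalized) vector `|0000⟩ + e^{iξ}|0011⟩ + |1100⟩ + |1111⟩` -/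
def u (ξ : ℝ) : Q4 → ℂ := fun a =>
  if a = ((0 : Fin 2), (0 : Fin 2), (0 : Fin 2), (0 : Fin 2)) then 1
  else if a = (0, 0, 1, 1) then Complex.exp (Complex.I * ξ)
  else if a = (1, 1, 0, 0) then 1
  else if a = (1, 1, 1, 1) then 1
  else 0

/-- the rank-one matrix supported on the span of `{|0000⟩,|0011⟩,|1100⟩,|1111⟩}` whose matrix in
that ordered basis is `(1/4)·[[1, e^{−iξ}, 1, 1],[e^{iξ}, 1, e^{iξ}, e^{iξ}],[1, e^{−iξ}, 1, 1],
[1, e^{−iξ}, 1, 1]]` -/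
def Rmat (ξ : ℝ) : Matrix Q4 Q4 ℂ :=
  Matrix.of fun a b => (1 / 4 : ℂ) * u ξ a * conj (u ξ b)

lemma bell1_real (p : Fin 2 × Fin 2) : conj (bell1 p) = bell1 p := by
  unfold bell1; split_ifs <;> simp

lemma filterOp_symm (a b : Q4) : conj (filterOp a b) = filterOp b a := by
  unfold filterOp mid outer
  simp only [Matrix.of_apply, Matrix.sub_apply, Matrix.one_apply, _root_.map_mul, map_sub,
    apply_ite (starRingEnd ℂ), _root_.map_one, map_zero, bell1_real]
  simp only [eq_comm]
  ring

lemma outer_mulVec (M : Matrix Q4 Q4 ℂ) (v : Q4 → ℂ)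
    (hM : ∀ a b, conj (M a b) = M b a) :
    outer (M.mulVec v) (M.mulVec v) = M * outer v v * M := by
  ext i j
  simp only [outer, Matrix.of_apply, Matrix.mul_apply, Matrix.mulVec, dotProduct,
    map_sum, _root_.map_mul, Finset.sum_mul, Finset.mul_sum]
  conv_rhs => rw [Finset.sum_comm]
  rw [Finset.sum_comm]
  refine Finset.sum_congr rfl fun l _ => Finset.sum_congr rfl fun k _ => ?_
  rw [← hM j k]
  ring

/-- `(I₂ ⊗ T_Z(ξ) ⊗ I₂)(|η₁⟩ ⊗ |η₁⟩) = (1/2)(|0000⟩ + e^{iξ}|0011⟩ + |1100⟩ +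
|1111⟩)` and consequently `|D_Z(ξ)⟩⟨D_Z(ξ)| = Π · R(ξ) · Π` where
`Π = I₂ ⊗ (I₄ − |η₁⟩⟨η₁|) ⊗ I₂`. -/
theorem statement0 (ξ : ℝ) :
    (mid (TZ ξ)).mulVec bellPair = (1 / 2 : ℂ) • u ξ ∧
    outer (DZ ξ) (DZ ξ) = filterOp * Rmat ξ * filterOp := by
  have hs : (((Real.sqrt 2 : ℝ) : ℂ))⁻¹ * (((Real.sqrt 2 : ℝ) : ℂ))⁻¹ = 1 / 2 := by
    rw [← mul_inv, ← Complex.ofReal_mul, Real.mul_self_sqrt (by norm_num : (0:ℝ) ≤ 2)]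
    norm_num
  have h1 : (mid (TZ ξ)).mulVec bellPair = (1 / 2 : ℂ) • u ξ := by
    funext a
    obtain ⟨a1, a2, a3, a4⟩ := a
    simp only [Matrix.mulVec, dotProduct, Fintype.sum_prod_type, Fin.sum_univ_two]
    fin_cases a1 <;> fin_cases a2 <;> fin_cases a3 <;> fin_cases a4 <;>
      · simp only [mid, TZ, bellPair, bell1, u, Matrix.of_apply, Matrix.diagonal_apply,
          Prod.mk.injEq]
        norm_num [u, hs, Prod.ext_iff, mul_comm]
  refine ⟨h1, ?_⟩
  have hR : Rmat ξ = outer ((1 / 2 : ℂ) • u ξ) ((1 / 2 : ℂ) • u ξ) := by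
    ext a b
    simp only [Rmat, outer, Matrix.of_apply, Pi.smul_apply, smul_eq_mul, _root_.map_mul,
      map_div₀, _root_.map_one, map_ofNat]
    ring
  rw [hR, show DZ ξ = filterOp.mulVec ((1 / 2 : ℂ) • u ξ) by rw [DZ, h1]]
  exact outer_mulVec filterOp _ filterOp_symm

end
end

section
/- Let ρ_Z : ZMod 8 → Matrix (Fin 16) (Fin 16) ℂ be given by ρ_Z(k) = |D_Z(kπ/4)⟩⟨D_Z(kπ/4)| (well defined since T_Z(ξ) is 2π-periodic in ξ). Then for every k : ZMod 8, (1/2)(ρ_Z(k) + ρ_Z(k+4)) = (1/8)·Σ_{k' : ZMod 8} ρ_Z(k'). In particular the average over the two angles ξ and ξ+π of the Z-Dango projectors is independent of ξ ∈ {kπ/4 : k=0,…,7} and equals the uniform average over all eight angles. -/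
open Matrix Complex
open scoped ComplexConjugate

noncomputable def wv : Q4 → ℂ := fun a => if a = (0,0,1,1) then (1/2 : ℂ) else 0

noncomputable def vv : Q4 → ℂ := fun a =>
  if a = (0,0,0,0) then (1/4 : ℂ)
  else if a = (0,1,1,0) then (-1/4 : ℂ)
  else if a = (1,0,0,1) then (-1/4 : ℂ)
  else if a = (1,1,1,1) then (1/4 : ℂ)
  else if a = (1,1,0,0) then (1/2 : ℂ)
  else 0

set_option maxHeartbeats 2000000 in
lemma DZ_eq (ξ : ℝ) : DZ ξ = fun a => vv a + Complex.exp (Complex.I * ξ) * wv a := by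
  have h2 : ((Real.sqrt 2 : ℝ) : ℂ)⁻¹ * ((Real.sqrt 2 : ℝ) : ℂ)⁻¹ = 1/2 := by
    rw [← mul_inv, ← Complex.ofReal_mul, Real.mul_self_sqrt (by norm_num : (0:ℝ) ≤ 2)]
    norm_num
  funext a
  obtain ⟨a1, a2, a3, a4⟩ := a
  fin_cases a1 <;> fin_cases a2 <;> fin_cases a3 <;> fin_cases a4 <;>
    first
    | · norm_num [DZ, filterOp, mid, TZ, bellPair, bell1, outer, mulVec, dotProduct,
        Matrix.sub_apply, Matrix.one_apply, Matrix.diagonal_apply,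
        Fintype.sum_prod_type, Fin.sum_univ_two, Prod.ext_iff, vv, wv, h2]
        ring
    | · norm_num [DZ, filterOp, mid, TZ, bellPair, bell1, outer, mulVec, dotProduct,
        Matrix.sub_apply, Matrix.one_apply, Matrix.diagonal_apply,
        Fintype.sum_prod_type, Fin.sum_univ_two, Prod.ext_iff, vv, wv, h2]


noncomputable def Vv : Fin 16 → ℂ := fun x => vv (q4Equiv.symm x)
noncomputable def Wv : Fin 16 → ℂ := fun x => wv (q4Equiv.symm x)

lemma DZ16_eq (ξ : ℝ) : DZ16 ξ = fun x => Vv x + Complex.exp (Complex.I * ξ) * Wv x := by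
  funext x
  simp [DZ16, DZ_eq, Vv, Wv]

lemma conj_exp (ξ : ℝ) : conj (Complex.exp (Complex.I * ξ)) = Complex.exp (-(Complex.I * ξ)) := by
  rw [← Complex.exp_conj, _root_.map_mul, Complex.conj_I, Complex.conj_ofReal, neg_mul]

lemma exp_mul_conj (ξ : ℝ) :
    Complex.exp (Complex.I * ξ) * conj (Complex.exp (Complex.I * ξ)) = 1 := by
  rw [conj_exp, ← Complex.exp_add, add_neg_cancel, Complex.exp_zero]

lemma rhoZ_eq (k : ZMod 8) :
    rhoZ k = (outer Vv Vv + outer Wv Wv)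
      + Complex.exp (Complex.I * angle k) • outer Wv Vv
      + conj (Complex.exp (Complex.I * angle k)) • outer Vv Wv := by
  have h := exp_mul_conj (angle k)
  ext i j
  simp only [rhoZ, DZ16_eq, outer, Matrix.add_apply, Matrix.smul_apply, Matrix.of_apply,
    map_add, _root_.map_mul, smul_eq_mul]
  ring_nf
  linear_combination Wv i * conj (Wv j) * h

noncomputable def ω : ℂ := Complex.exp (Complex.I * (Real.pi / 4))

lemma exp_angle (k : ZMod 8) : Complex.exp (Complex.I * angle k) = ω ^ k.val := by
  rw [ω, ← Complex.exp_nat_mul]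
  congr 1
  rw [angle]
  push_cast
  ring

lemma ω4 : ω ^ 4 = -1 := by
  rw [ω, ← Complex.exp_nat_mul]
  rw [show ((4:ℕ) : ℂ) * (Complex.I * (Real.pi / 4)) = Real.pi * Complex.I by push_cast; ring]
  exact Complex.exp_pi_mul_I

lemma ω8 : ω ^ 8 = 1 := by
  have : ω ^ 8 = (ω ^ 4) ^ 2 := by ring
  rw [this, ω4]; ring

lemma ω_pow_mod (n : ℕ) : ω ^ (n % 8) = ω ^ n := by
  conv_rhs => rw [← Nat.div_add_mod n 8]
  rw [pow_add, pow_mul, ω8, one_pow, one_mul]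

lemma exp_angle_add4 (k : ZMod 8) :
    Complex.exp (Complex.I * angle (k + 4)) = -Complex.exp (Complex.I * angle k) := by
  rw [exp_angle, exp_angle]
  have : (k + 4).val = (k.val + 4) % 8 := by
    rw [ZMod.val_add]
    congr 1
  rw [this, ω_pow_mod, pow_add, ω4]
  ring

lemma sum_exp_angle : ∑ k : ZMod 8, Complex.exp (Complex.I * angle k) = 0 := by
  simp only [exp_angle]
  have : ∑ k : ZMod 8, ω ^ k.val = ∑ j : Fin 8, ω ^ (j : ℕ) := rfl
  rw [this, Fin.sum_univ_eight]
  have h4 := ω4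
  norm_num [show ((0:Fin 8):ℕ) = 0 from rfl, show ((1:Fin 8):ℕ) = 1 from rfl,
    show ((2:Fin 8):ℕ) = 2 from rfl, show ((3:Fin 8):ℕ) = 3 from rfl,
    show ((4:Fin 8):ℕ) = 4 from rfl, show ((5:Fin 8):ℕ) = 5 from rfl,
    show ((6:Fin 8):ℕ) = 6 from rfl, show ((7:Fin 8):ℕ) = 7 from rfl]
  linear_combination (1 + ω + ω^2 + ω^3) * h4

theorem statement1' (k : ZMod 8) :
    (1 / 2 : ℂ) • (rhoZ k + rhoZ (k + 4)) = (1 / 8 : ℂ) • ∑ k' : ZMod 8, rhoZ k' := by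
  have hsum : ∑ k' : ZMod 8, conj (Complex.exp (Complex.I * angle k')) = 0 := by
    rw [← map_sum, sum_exp_angle, map_zero]
  simp only [rhoZ_eq]
  rw [Finset.sum_add_distrib, Finset.sum_add_distrib, Finset.sum_const,
    ← Finset.sum_smul, ← Finset.sum_smul, sum_exp_angle, hsum,
    exp_angle_add4, map_neg]
  simp only [zero_smul, add_zero, Finset.card_univ]
  have hcard : (Fintype.card (ZMod 8)) = 8 := rfl
  rw [hcard]
  generalize outer Vv Vv + outer Wv Wv = A
  generalize Complex.exp (Complex.I * angle k) = e
  generalize (outer Wv Vv : Matrix (Fin 16) (Fin 16) ℂ) = B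
  generalize (outer Vv Wv : Matrix (Fin 16) (Fin 16) ℂ) = C
  module

/-- For every `k : ZMod 8`, the average of the Z-Dango projectors over the two
angles `kπ/4` and `kπ/4 + π` equals the uniform average over all eight angles:
`(1/2)(ρ_Z(k) + ρ_Z(k+4)) = (1/8)·Σ_{k'} ρ_Z(k')`. -/
theorem statement1 (k : ZMod 8) :
    (1 / 2 : ℂ) • (rhoZ k + rhoZ (k + 4)) = (1 / 8 : ℂ) • ∑ k' : ZMod 8, rhoZ k' := by
  exact statement1' k
end

section
/- Let ρ_X : ZMod 8 → Matrix (Fin 16) (Fin 16) ℂ be given by ρ_X(k) = |D_X(kπ/4)⟩⟨D_X(kπ/4)| (well defined since T_X(ξ) is 2π-periodic in ξ). Then for every k : ZMod 8, (1/2)(ρ_X(k) + ρ_X(k+4)) = (1/8)·Σ_{k' : ZMod 8} ρ_X(k'). In particular the average over the two angles ξ and ξ+π of the X-Dango projectors is independent of ξ ∈ {kπ/4 : k=0,…,7} and equals the uniform average over all eight angles. -/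
open Matrix Complex
open scoped ComplexConjugate

noncomputable section S2aux

/-- the `ξ`-independent part of `T_X` -/
def TXA : Matrix (Fin 2 × Fin 2) (Fin 2 × Fin 2) ℂ :=
  (1/2 : ℂ) • (outer bell2 bell2 + outer bell4 bell4 + outer bell2 bell4 + outer bell4 bell2)
    + outer bell1 bell1 + outer bell3 bell3

/-- the part of `T_X` with coefficient `e^{iξ}` -/
def TXB : Matrix (Fin 2 × Fin 2) (Fin 2 × Fin 2) ℂ :=
  (1/2 : ℂ) • (outer bell2 bell2 + outer bell4 bell4 - outer bell2 bell4 - outer bell4 bell2)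

lemma TX_eq (ξ : ℝ) : TX ξ = TXA + Complex.exp (Complex.I * ξ) • TXB := by
  ext i j
  simp only [TX, TXA, TXB, Matrix.add_apply, Matrix.smul_apply, Matrix.sub_apply, smul_eq_mul]
  ring

def U16 : Fin 16 → ℂ := fun x => filterOp.mulVec ((mid TXA).mulVec bellPair) (q4Equiv.symm x)
def V16 : Fin 16 → ℂ := fun x => filterOp.mulVec ((mid TXB).mulVec bellPair) (q4Equiv.symm x)

lemma mid_add (A B : Matrix (Fin 2 × Fin 2) (Fin 2 × Fin 2) ℂ) :
    mid (A + B) = mid A + mid B := by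
  ext a b
  simp only [mid, Matrix.add_apply, Matrix.of_apply]
  ring

lemma mid_smul (c : ℂ) (A : Matrix (Fin 2 × Fin 2) (Fin 2 × Fin 2) ℂ) :
    mid (c • A) = c • mid A := by
  ext a b
  simp only [mid, Matrix.smul_apply, Matrix.of_apply, smul_eq_mul]
  ring

lemma DX16_eq (ξ : ℝ) :
    DX16 ξ = fun x => U16 x + Complex.exp (Complex.I * ξ) * V16 x := by
  funext x
  simp only [DX16, DX, TX_eq, mid_add, mid_smul, Matrix.add_mulVec, Matrix.smul_mulVec,
    Matrix.mulVec_add, Matrix.mulVec_smul, U16, V16, Pi.add_apply, Pi.smul_apply, smul_eq_mul]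

/-- `E k = e^{i k π/4}` -/
def E (k : ZMod 8) : ℂ := Complex.exp (Complex.I * angle k)

lemma E_mul_conj (k : ZMod 8) : E k * conj (E k) = 1 := by
  rw [E, ← Complex.exp_conj, ← Complex.exp_add]
  have : (starRingEnd ℂ) (Complex.I * (angle k : ℝ)) = -(Complex.I * (angle k : ℝ)) := by
    simp [Complex.conj_I, mul_comm]
  rw [this, add_neg_cancel, Complex.exp_zero]

lemma zeta_pow (k : ZMod 8) : E k = Complex.exp (Complex.I * (Real.pi / 4)) ^ k.val := by
  rw [E, ← Complex.exp_nat_mul]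
  congr 1
  push_cast [angle]
  ring

lemma E_add4 (k : ZMod 8) : E (k + 4) = - E k := by
  have h8 : Complex.exp (Complex.I * (Real.pi / 4)) ^ 8 = 1 := by
    rw [← Complex.exp_nat_mul]
    have : (8 : ℕ) * (Complex.I * (Real.pi / 4)) = 2 * Real.pi * Complex.I := by push_cast; ring
    rw [this, Complex.exp_two_pi_mul_I]
  have h4 : Complex.exp (Complex.I * (Real.pi / 4)) ^ 4 = -1 := by
    rw [← Complex.exp_nat_mul]
    have : (4 : ℕ) * (Complex.I * (Real.pi / 4)) = Real.pi * Complex.I := by push_cast; ring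
    rw [this, Complex.exp_pi_mul_I]
  rw [zeta_pow, zeta_pow]
  have hv : (k + 4).val = (k.val + 4) % 8 := by
    rw [ZMod.val_add]; rfl
  rw [hv, ← pow_eq_pow_mod _ h8, pow_add, h4]
  ring

lemma E_sum : ∑ k' : ZMod 8, E k' = 0 := by
  have h : ∑ k' : ZMod 8, E (k' + 4) = ∑ k' : ZMod 8, E k' :=
    Equiv.sum_comp (Equiv.addRight (4 : ZMod 8)) E
  simp only [E_add4, Finset.sum_neg_distrib] at h
  linear_combination -h / 2

lemma rhoX_apply (k : ZMod 8) (i j : Fin 16) :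
    rhoX k i j = (U16 i * conj (U16 j) + V16 i * conj (V16 j))
      + E k * (V16 i * conj (U16 j)) + conj (E k) * (U16 i * conj (V16 j)) := by
  have h := E_mul_conj k
  simp only [rhoX, outer, DX16_eq, Matrix.of_apply, map_add, _root_.map_mul, E]
  rw [E] at h
  linear_combination (V16 i * conj (V16 j)) * h

end S2aux

/-- For every `k : ZMod 8`, the average of the X-Dango projectors over the two
angles `kπ/4` and `kπ/4 + π` equals the uniform average over all eight angles:
`(1/2)(ρ_X(k) + ρ_X(k+4)) = (1/8)·Σ_{k'} ρ_X(k')`. -/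
theorem statement2 (k : ZMod 8) :
    (1 / 2 : ℂ) • (rhoX k + rhoX (k + 4)) = (1 / 8 : ℂ) • ∑ k' : ZMod 8, rhoX k' := by
  ext i j
  simp only [Matrix.smul_apply, Matrix.add_apply, Matrix.sum_apply, rhoX_apply, smul_eq_mul,
    E_add4, map_neg]
  rw [Finset.sum_add_distrib, Finset.sum_add_distrib, ← Finset.sum_mul, ← Finset.sum_mul,
    Finset.sum_const, ← map_sum, E_sum, map_zero]
  simp only [Finset.card_univ, ZMod.card, nsmul_eq_mul, Nat.cast_ofNat, zero_mul]
  ring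
end

section
/- There exists a unitary matrix W on ℂ^{16} ≅ (ℂ²)^{⊗4}, independent of ξ, such that for every ξ ∈ ℝ, W · (I₂⊗T_Z(ξ)⊗I₂)(|η₁⟩⊗|η₁⟩) = (I₂⊗T_X(ξ)⊗I₂)(|η₁⟩⊗|η₁⟩). -/
open Matrix Complex
open scoped ComplexConjugate

noncomputable section

def tsgn (a : Q4) : ℂ := if a.1 = a.2.1 then 1 else -1

def ep (a : Q4) : ℂ := if a = ((0:Fin 2),(0:Fin 2),(1:Fin 2),(1:Fin 2)) then 1 else 0

lemma outer_mul_outer {n : Type*} [Fintype n] (v w x y : n → ℂ) :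
    outer v w * outer x y = (∑ i, conj (w i) * x i) • outer v y := by
  ext a b
  simp [outer, Matrix.mul_apply, Finset.sum_mul, Finset.mul_sum]
  congr 1; ext i; ring

lemma tsgn_real (a : Q4) : conj (tsgn a) = tsgn a := by
  unfold tsgn; split <;> simp

lemma ep_real (a : Q4) : conj (ep a) = ep a := by
  unfold ep; split <;> simp

lemma dot_tt : (∑ i : Q4, conj (tsgn i) * tsgn i) = 16 := by
  simp only [tsgn_real]
  simp [Fintype.sum_prod_type, Fin.sum_univ_two, tsgn]
  norm_num

lemma dot_te : (∑ i : Q4, conj (tsgn i) * ep i) = 1 := by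
  simp only [tsgn_real]
  simp [Fintype.sum_prod_type, Fin.sum_univ_two, tsgn, ep]

lemma dot_et : (∑ i : Q4, conj (ep i) * tsgn i) = 1 := by
  simp only [ep_real]
  simp [Fintype.sum_prod_type, Fin.sum_univ_two, tsgn, ep]
  decide

lemma dot_ee : (∑ i : Q4, conj (ep i) * ep i) = 1 := by
  simp only [ep_real]
  simp [Fintype.sum_prod_type, Fin.sum_univ_two, ep]

def Wmat : Matrix Q4 Q4 ℂ :=
  1 - (1/12 : ℂ) • outer tsgn tsgn + (1/3 : ℂ) • outer ep tsgn
    + (1/3 : ℂ) • outer tsgn ep - (4/3 : ℂ) • outer ep ep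

lemma outer_conjT (v w : Q4 → ℂ) (hv : ∀ a, conj (v a) = v a) (hw : ∀ a, conj (w a) = w a) :
    (outer v w)ᴴ = outer w v := by
  ext a b; simp [outer, Matrix.conjTranspose_apply, hv, hw, mul_comm]

lemma Wsymm : Wmatᴴ = Wmat := by
  simp only [Wmat, conjTranspose_add, conjTranspose_sub, conjTranspose_smul, conjTranspose_one,
    outer_conjT tsgn tsgn tsgn_real tsgn_real, outer_conjT ep tsgn ep_real tsgn_real,
    outer_conjT tsgn ep tsgn_real ep_real, outer_conjT ep ep ep_real ep_real]
  norm_num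
  ring_nf
  abel

lemma Wunitary : Wmat * Wmatᴴ = 1 := by
  rw [Wsymm]
  simp only [Wmat]
  simp only [mul_add, add_mul, mul_sub, sub_mul, Matrix.smul_mul, Matrix.mul_smul, one_mul,
    mul_one, outer_mul_outer, dot_tt, dot_te, dot_et, dot_ee, smul_smul]
  norm_num
  module

lemma hs : ((1 / Real.sqrt 2 : ℝ) : ℂ) * ((1 / Real.sqrt 2 : ℝ) : ℂ) = 1/2 := by
  rw [← Complex.ofReal_mul]
  rw [div_mul_div_comm, one_mul, Real.mul_self_sqrt (by norm_num)]
  norm_num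

lemma h2 : ((Real.sqrt 2 : ℝ) : ℂ)⁻¹ * ((Real.sqrt 2 : ℝ) : ℂ)⁻¹ = 1/2 := by
  rw [← mul_inv, ← Complex.ofReal_mul, Real.mul_self_sqrt (by norm_num)]
  norm_num

lemma h4' : (((Real.sqrt 2 : ℝ) : ℂ)⁻¹) ^ 4 = 1/4 := by
  rw [inv_pow]
  have : ((Real.sqrt 2 : ℝ) : ℂ) ^ 4 = (((Real.sqrt 2:ℝ):ℂ) * ((Real.sqrt 2:ℝ):ℂ))^2 := by ring
  rw [this, ← Complex.ofReal_mul, Real.mul_self_sqrt (by norm_num)]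
  norm_num

lemma h4 : (((Real.sqrt 2 : ℝ) : ℂ) ^ 4)⁻¹ = 1/4 := by
  have : ((Real.sqrt 2 : ℝ) : ℂ) ^ 4 = (((Real.sqrt 2:ℝ):ℂ) * ((Real.sqrt 2:ℝ):ℂ))^2 := by ring
  rw [this, ← Complex.ofReal_mul, Real.mul_self_sqrt (by norm_num)]
  norm_num

def vZfun (ξ : ℝ) : Q4 → ℂ := fun a =>
  if a = ((0:Fin 2),(0:Fin 2),(0:Fin 2),(0:Fin 2)) then 1/2
  else if a = (1,1,0,0) then 1/2
  else if a = (1,1,1,1) then 1/2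
  else if a = (0,0,1,1) then Complex.exp (Complex.I * ξ)/2 else 0

def vXfun (ξ : ℝ) : Q4 → ℂ := fun a =>
  if a.1 = a.2.1 then
    (if a.2.2.1 = a.2.2.2 then (3 + Complex.exp (Complex.I * ξ))/8
     else (Complex.exp (Complex.I * ξ) - 1)/8)
  else (1 - Complex.exp (Complex.I * ξ))/8

set_option maxHeartbeats 2000000 in
lemma hZvec (ξ : ℝ) : (mid (TZ ξ)).mulVec bellPair = vZfun ξ := by
  funext ⟨a1,a2,a3,a4⟩
  fin_cases a1 <;> fin_cases a2 <;> fin_cases a3 <;> fin_cases a4 <;>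
  · simp only [Matrix.mulVec, dotProduct, Fintype.sum_prod_type, Fin.sum_univ_two, mid, TZ,
      bellPair, bell1, vZfun, Matrix.of_apply, Matrix.diagonal_apply]
    norm_num [Prod.ext_iff, hs, Complex.conj_ofReal]
    try simp only [h2, h4, h4']
    try ring

set_option maxHeartbeats 4000000 in
lemma hXvec (ξ : ℝ) : (mid (TX ξ)).mulVec bellPair = vXfun ξ := by
  funext ⟨a1,a2,a3,a4⟩
  fin_cases a1 <;> fin_cases a2 <;> fin_cases a3 <;> fin_cases a4 <;>
  · simp only [Matrix.mulVec, dotProduct, Fintype.sum_prod_type, Fin.sum_univ_two, mid, TX,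
      bellPair, bell1, bell2, bell3, bell4, outer, vXfun, Matrix.of_apply, Matrix.add_apply,
      Matrix.smul_apply, smul_eq_mul]
    norm_num [Prod.ext_iff, Complex.conj_ofReal]
    try ring_nf
    try simp only [h2, h4, h4']
    try ring

set_option maxHeartbeats 4000000 in
lemma key (ξ : ℝ) : Wmat.mulVec (vZfun ξ) = vXfun ξ := by
  funext ⟨a1,a2,a3,a4⟩
  fin_cases a1 <;> fin_cases a2 <;> fin_cases a3 <;> fin_cases a4 <;>
  · simp only [Matrix.mulVec, dotProduct, Fintype.sum_prod_type, Fin.sum_univ_two, Wmat,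
      Matrix.add_apply, Matrix.sub_apply, Matrix.smul_apply, Matrix.one_apply, outer, tsgn, ep,
      vZfun, vXfun, Matrix.of_apply, smul_eq_mul]
    norm_num [Prod.ext_iff, Complex.conj_ofReal]
    try ring

end

/-- There exists a unitary matrix `W` on `ℂ^{16} ≅ (ℂ²)^{⊗4}`, independent of
`ξ`, such that for every `ξ ∈ ℝ`,
`W · (I₂⊗T_Z(ξ)⊗I₂)(|η₁⟩⊗|η₁⟩) = (I₂⊗T_X(ξ)⊗I₂)(|η₁⟩⊗|η₁⟩)`. -/
theorem statement3 :
    ∃ W : Matrix Q4 Q4 ℂ, W * Wᴴ = 1 ∧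
      ∀ ξ : ℝ, W.mulVec ((mid (TZ ξ)).mulVec bellPair) = (mid (TX ξ)).mulVec bellPair := by
  refine ⟨Wmat, Wunitary, fun ξ => ?_⟩
  rw [hZvec, hXvec]
  exact key ξ
end

section
/- (Measurement of an AKLT qutrit after the permutation V implements an X-rotation in the correlation space.) For every φ ∈ ℝ, the following identities of 2×2 complex matrices hold: ((1 + e^{−iφ})/2) • (X·Z) + ((1 − e^{−iφ})/2) • Z = e^{−iφ/2} • ((X·Z) · exp((−iφ/2) • X)), and ((1 − e^{−iφ})/2) • (X·Z) + ((1 + e^{−iφ})/2) • Z = e^{−iφ/2} • (Z · exp((−iφ/2) • X)). That is, after relabeling the AKLT tensors by the permutation V (so that the outcomes α(φ), β(φ) contract against A[2]=X·Z and A[3]=Z), the measurement implements XZ e^{−iφX/2} and Z e^{−iφX/2}, respectively, up to the global phase e^{−iφ/2}. -/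
/-!
Since `X * X = 1`, the exponential series of `c • X` splits into its even and odd parts,
`exp (c • X) = cosh c • 1 + sinh c • X`. Multiplying on the left by `X * Z` or `Z` and using
`X * Z * X = -Z` and `Z * X = -(X * Z)`, both identities reduce to
`exp c * cosh c = (exp (2 * c) + 1) / 2` and `exp c * sinh c = (exp (2 * c) - 1) / 2`
with `c = -iφ/2`.
-/

open Matrix

noncomputable section

/-- Pauli matrix `X` -/
def X : Matrix (Fin 2) (Fin 2) ℂ := !![0, 1; 1, 0]

/-- Pauli matrix `Z` -/
def Z : Matrix (Fin 2) (Fin 2) ℂ := !![1, 0; 0, -1]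

namespace NormedSpace

theorem exp_smul_of_mul_self_eq_one {A : Type*} [Ring A] [Algebra ℂ A] [TopologicalSpace A]
    [IsTopologicalRing A] [ContinuousSMul ℂ A] [T2Space A] {a : A} (ha : a * a = 1) (c : ℂ) :
    exp (c • a) = Complex.cosh c • (1 : A) + Complex.sinh c • a := by
  have h_even (n : ℕ) : a ^ (2 * n) = 1 := by rw [pow_mul, sq, ha, one_pow]
  rw [exp_eq_tsum ℂ]
  refine HasSum.tsum_eq (HasSum.even_add_odd ?_ ?_)
  · convert (Complex.hasSum_cosh c).smul_const (1 : A) using 2 with n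
    rw [smul_pow, h_even, smul_smul, div_eq_inv_mul]
  · convert (Complex.hasSum_sinh c).smul_const a using 2 with n
    rw [smul_pow, pow_succ a, h_even, one_mul, smul_smul, div_eq_inv_mul]

end NormedSpace

theorem Complex.exp_mul_cosh (z : ℂ) : exp z * cosh z = (exp (2 * z) + 1) / 2 := by
  rw [cosh, mul_div_assoc', mul_add, ← exp_add, ← exp_add, two_mul, add_neg_cancel, exp_zero]

theorem Complex.exp_mul_sinh (z : ℂ) : exp z * sinh z = (exp (2 * z) - 1) / 2 := by
  rw [sinh, mul_div_assoc', mul_sub, ← exp_add, ← exp_add, two_mul, add_neg_cancel, exp_zero]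

theorem X_mul_X : X * X = 1 := by
  simp [X, one_fin_two]

theorem Z_mul_X : Z * X = -(X * Z) := by
  simp [X, Z]

theorem X_mul_Z_mul_X : X * Z * X = -Z := by
  rw [mul_assoc, Z_mul_X, mul_neg, ← mul_assoc, X_mul_X, one_mul]

/-- **measurement of an AKLT qutrit after the permutation `V` implements an
X-rotation in the correlation space.** After relabeling by `V`, the outcomes `α(φ)`, `β(φ)`
contract against `A[2]=X·Z` and `A[3]=Z` and implement `XZ e^{−iφX/2}` and `Z e^{−iφX/2}`
respectively, up to the global phase `e^{−iφ/2}`. -/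
theorem statement14 (φ : ℝ) :
    ((1 + Complex.exp (-(Complex.I * φ))) / 2) • (X * Z)
        + ((1 - Complex.exp (-(Complex.I * φ))) / 2) • Z
      = Complex.exp (-(Complex.I * φ) / 2) •
          ((X * Z) * NormedSpace.exp ((-(Complex.I * φ) / 2) • X)) ∧
    ((1 - Complex.exp (-(Complex.I * φ))) / 2) • (X * Z)
        + ((1 + Complex.exp (-(Complex.I * φ))) / 2) • Z
      = Complex.exp (-(Complex.I * φ) / 2) •
          (Z * NormedSpace.exp ((-(Complex.I * φ) / 2) • X)) := by
  set c : ℂ := -(Complex.I * φ) / 2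
  have h_double : -(Complex.I * φ) = 2 * c := by ring
  rw [h_double, NormedSpace.exp_smul_of_mul_self_eq_one X_mul_X]
  simp only [mul_add, mul_smul_comm, mul_one, X_mul_Z_mul_X, Z_mul_X, smul_add, smul_smul,
    Complex.exp_mul_cosh, Complex.exp_mul_sinh]
  constructor <;> module

end
end
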